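/- Consider the orthogonal series D_n (N = 2n). Assume |r| = 1, that |q_{ab}| = 1 whenever a and b are both different from n and n+1, and that q_{ab}/r is real whenever at least one of a, b equals n or n+1. Let 𝒟 be the N×N permutation matrix exchanging the indices n and n+1. Then (𝒟 ⊗ 𝒟) R (𝒟 ⊗ 𝒟) = conj(R⁻¹), where R⁻¹ is the matrix inverse of R (equal to R_{q⁻¹,r⁻¹}) and conj denotes entrywise complex conjugation. (This is the identity underlying the *-conjugation defining the real form SO_{q,r}(n+1,n−1), in particular the quantum Lorentz group inside the quantum Poincaré group ISO_{q,r}(3,1).) -/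

import Mathlib

open Finset

/-- The three series `B_n` (N = 2n+1, ε = +1), `C_n` (N = 2n, ε = −1),
`D_n` (N = 2n, ε = +1). -/
inductive BCDSeries : Type
  | B : BCDSeries
  | C : BCDSeries
  | D : BCDSeries
deriving DecidableEq

/-- Kronecker delta with values in `ℂ`. -/
def kd {α : Type*} [DecidableEq α] (a b : α) : ℂ := if a = b then 1 else 0

/-- The dimension `N` of the fundamental representation. -/
def bigN : BCDSeries → ℕ → ℕ
  | BCDSeries.B, n => 2 * n + 1
  | BCDSeries.C, n => 2 * n
  | BCDSeries.D, n => 2 * n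

/-- The sign `ε`: `+1` for the orthogonal series `B_n, D_n`, `−1` for the symplectic
series `C_n`. -/
def epsZ : BCDSeries → ℤ
  | BCDSeries.B => 1
  | BCDSeries.C => -1
  | BCDSeries.D => 1

/-- The sign `ε` as a complex number. -/
noncomputable def epsC (S : BCDSeries) : ℂ := (epsZ S : ℂ)

/-- `ε_a` (for the 0-based index `i`, paper index `i+1`): `+1` for `B_n, D_n`; for `C_n`
it is `+1` for paper index `≤ n` and `−1` for paper index `> n`. -/
def epsA (S : BCDSeries) (n i : ℕ) : ℂ :=
  match S with
  | BCDSeries.C => if i < n then 1 else -1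
  | _ => 1

/-- `2·ρ_a ∈ ℤ` for the 0-based index `i` (paper index `i+1`); `ρ` is the vector
`(N/2−1, …, 1/2, 0, −1/2, …, −N/2+1)` for `B_n`, `(N/2, …, 1, −1, …, −N/2)` for `C_n`,
and `(N/2−1, …, 1, 0, 0, −1, …, −N/2+1)` for `D_n`. -/
def twoRho (S : BCDSeries) (n i : ℕ) : ℤ :=
  match S with
  | BCDSeries.B =>
      if i < n then (2 * n + 1 : ℤ) - 2 * (i + 1)
      else if i = n then 0
      else (2 * n + 3 : ℤ) - 2 * (i + 1)
  | BCDSeries.C =>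
      if i < n then (2 * n + 2 : ℤ) - 2 * (i + 1) else (2 * n : ℤ) - 2 * (i + 1)
  | BCDSeries.D =>
      if i < n then (2 * n : ℤ) - 2 * (i + 1) else (2 * n + 2 : ℤ) - 2 * (i + 1)

/-- `δ^{a n₂}` as a complex number: for `B_n` it is 1 iff the 0-based index `i` equals `n`
(paper index `n₂ = (N+1)/2 = n+1`); for `C_n, D_n` there is no index `n₂` and it is 0. -/
def isN2 (S : BCDSeries) (n i : ℕ) : ℂ :=
  match S with
  | BCDSeries.B => if i = n then 1 else 0
  | _ => 0

/-- The primed index `a' = N+1−a` (in 0-based indexing, `a' = N−1−a`). -/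
def pr {N : ℕ} (a : Fin N) : Fin N := ⟨N - 1 - a.val, by have := a.isLt; omega⟩

/-- The metric `C_{ab} = ε_a r^{−ρ_a} δ_{a b'}`, where `r^ρ := s^{2ρ}` for a fixed square
root `s` of `r`. -/
noncomputable def Cmet (S : BCDSeries) (n : ℕ) (s : ℂ)
    (a b : Fin (bigN S n)) : ℂ :=
  epsA S n a.val * s ^ (-(twoRho S n a.val)) * kd b (pr a)

/-- The inverse metric `C^{ab} = ε C_{ab}`. -/
noncomputable def Cup (S : BCDSeries) (n : ℕ) (s : ℂ)
    (a b : Fin (bigN S n)) : ℂ :=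
  epsC S * Cmet S n s a b

/-- The multiparametric `B,C,D` R-matrix
`R^{ab}_{cd} = δ^a_c δ^b_d [r/q_{ab} + (r−1)δ^{ab} + (r⁻¹−1)δ^{a b'}](1−δ^{a n₂})
  + δ^a_{n₂} δ^b_{n₂} δ^{n₂}_c δ^{n₂}_d
  + (r−r⁻¹)[θ^{ab} δ^b_c δ^a_d − ε_a ε_c θ^{ac} r^{ρ_a−ρ_c} δ^{a'b} δ_{c'd}]`,
with `θ^{ab} = 1` iff `a > b`, and `r^ρ := s^{2ρ}`.  Indices are 0-based. -/
noncomputable def Rbcd (S : BCDSeries) (n : ℕ) (r s : ℂ)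
    (q : Fin (bigN S n) → Fin (bigN S n) → ℂ)
    (a b c d : Fin (bigN S n)) : ℂ :=
  kd a c * kd b d *
      (r / q a b + (r - 1) * kd a b + (r⁻¹ - 1) * kd b (pr a)) * (1 - isN2 S n a.val)
    + isN2 S n a.val * isN2 S n b.val * isN2 S n c.val * isN2 S n d.val
    + (r - r⁻¹) *
        ((if b < a then (1 : ℂ) else 0) * kd b c * kd a d
          - epsA S n a.val * epsA S n c.val * (if c < a then (1 : ℂ) else 0) *
              s ^ (twoRho S n a.val - twoRho S n c.val) * kd b (pr a) * kd d (pr c))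

/-- `R̂^{ab}_{cd} := R^{ba}_{cd}`. -/
noncomputable def RbcdHat (S : BCDSeries) (n : ℕ) (r s : ℂ)
    (q : Fin (bigN S n) → Fin (bigN S n) → ℂ)
    (a b c d : Fin (bigN S n)) : ℂ :=
  Rbcd S n r s q b a c d

/-- The R-matrix with all deformation parameters inverted, `R_{q⁻¹,r⁻¹}` (also the chosen
square root `s` of `r` is replaced by `s⁻¹`). -/
noncomputable def RbcdInv (S : BCDSeries) (n : ℕ) (r s : ℂ)
    (q : Fin (bigN S n) → Fin (bigN S n) → ℂ)
    (a b c d : Fin (bigN S n)) : ℂ :=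
  Rbcd S n r⁻¹ s⁻¹ (fun x y => (q x y)⁻¹) a b c d

/-- The entries of the matrix `𝒟` (0-based indices `i, j`): for `B_n` it is the diagonal
matrix with entry `−1` in position `n₂` (paper index `n+1`, 0-based `n`) and `+1`
elsewhere; for `D_n` it is the permutation matrix exchanging the indices `n` and `n+1`
(0-based `n−1` and `n`) and fixing all others.  (The `C_n` branch, which is never used,
is set to the identity.) -/
noncomputable def DmatE (S : BCDSeries) (n i j : ℕ) : ℂ :=
  match S with
  | BCDSeries.B => if i = j then (if i = n then -1 else 1) else 0
  | BCDSeries.C => if i = j then 1 else 0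
  | BCDSeries.D =>
      if i = n - 1 then (if j = n then 1 else 0)
      else if i = n then (if j = n - 1 then 1 else 0)
      else if i = j then 1 else 0

/-- The matrix `𝒟` on `Fin (bigN S n)`. -/
noncomputable def Dmat (S : BCDSeries) (n : ℕ) (a b : Fin (bigN S n)) : ℂ :=
  DmatE S n a.val b.val

/-!
`𝒟` is the permutation matrix of the transposition `σ` of the middle pair of indices, so the
left-hand side is `R^{σa σb}_{σc σd}`. The transposition commutes with `a ↦ a'`, fixes `ρ`
(which vanishes on the middle pair) and preserves the order of indices except on the middle
pair; there both order conditions in the crossing terms of `R` flip at once and the two terms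
cancel. Hence conjugating by `𝒟` only replaces `q_{ab}` by `q_{σa σb}`. On the other side all
coefficients of `R` other than `r`, `√r`, `q` are real, so `|r| = 1` turns `conj R_{q⁻¹,r⁻¹}`
into `R` with `q_{ab}` replaced by `conj(q_{ab})⁻¹`. The hypotheses say exactly that
`q_{σa σb} = conj(q_{ab})⁻¹`: away from the middle pair this is `|q_{ab}| = 1`; otherwise
`conj q_{ab} = q_{ab} / r²` and `q_{σa σb} q_{ab} = r²` by the symmetries of `q`.
-/

lemma kd_self {α : Type*} [DecidableEq α] (a : α) : kd a a = 1 := if_pos rfl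

lemma kd_of_ne {α : Type*} [DecidableEq α] {a b : α} (h : a ≠ b) : kd a b = 0 := if_neg h

lemma kd_comm {α : Type*} [DecidableEq α] (a b : α) : kd a b = kd b a := by
  simp only [kd, eq_comm]

lemma conj_kd {α : Type*} [DecidableEq α] (a b : α) : starRingEnd ℂ (kd a b) = kd a b := by
  unfold kd; split_ifs <;> simp

theorem sum_permMatrix_conj {ι : Type*} [Fintype ι] [DecidableEq ι] (σ : ι → ι)
    (P : ι → ι → ℂ) (hPl : ∀ x y, P x y = kd y (σ x)) (hPr : ∀ x y, P x y = kd x (σ y))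
    (R : ι → ι → ι → ι → ℂ) (a b c d : ι) :
    ∑ e, ∑ f, ∑ g, ∑ h, P a e * P b f * R e f g h * P g c * P h d
      = R (σ a) (σ b) (σ c) (σ d) := by
  simp [hPl a, hPl b, hPr _ c, hPr _ d, kd, Finset.sum_ite_eq']

lemma conj_isN2 (S : BCDSeries) (n i : ℕ) : starRingEnd ℂ (isN2 S n i) = isN2 S n i := by
  cases S <;> simp only [isN2, apply_ite (starRingEnd ℂ), map_one, map_zero]

lemma conj_epsA (S : BCDSeries) (n i : ℕ) : starRingEnd ℂ (epsA S n i) = epsA S n i := by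
  cases S <;> simp only [epsA, apply_ite (starRingEnd ℂ), map_one, map_neg]

lemma conj_ite_one_zero (p : Prop) [Decidable p] :
    starRingEnd ℂ (if p then 1 else 0) = if p then 1 else 0 := by
  simp only [apply_ite (starRingEnd ℂ), map_one, map_zero]

theorem conj_Rbcd (S : BCDSeries) (n : ℕ) (r s : ℂ) (q : Fin (bigN S n) → Fin (bigN S n) → ℂ)
    (a b c d : Fin (bigN S n)) :
    starRingEnd ℂ (Rbcd S n r s q a b c d)
      = Rbcd S n (starRingEnd ℂ r) (starRingEnd ℂ s) (fun x y => starRingEnd ℂ (q x y))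
          a b c d := by
  simp only [Rbcd, map_add, map_sub, map_mul, map_div₀, map_inv₀, map_one, map_zpow₀, conj_kd,
    conj_isN2, conj_epsA, conj_ite_one_zero]

lemma pr_eq_rev {N : ℕ} (a : Fin N) : pr a = a.rev := Fin.ext (by simp [pr]; omega)

lemma pr_pr {N : ℕ} (a : Fin N) : pr (pr a) = a := by simp [pr_eq_rev]

lemma conj_eq_div_sq_of_im_div_eq_zero {z r : ℂ} (hr : ‖r‖ = 1) (h : (z / r).im = 0) :
    starRingEnd ℂ z = z / r ^ 2 := by
  have hr₀ : r ≠ 0 := ne_zero_of_norm_ne_zero (hr ▸ one_ne_zero)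
  calc starRingEnd ℂ z = starRingEnd ℂ (z / r) * starRingEnd ℂ r := by
        rw [← map_mul, div_mul_cancel₀ z hr₀]
    _ = z / r * r⁻¹ := by rw [Complex.conj_eq_iff_im.mpr h, Complex.inv_eq_conj hr]
    _ = z / r ^ 2 := by ring

section DSeries

variable {n : ℕ}

/-- The paper's middle pair `{n, n+1}` is `{n-1, n}` in 0-based indexing. -/
abbrev IsMid (a : Fin (bigN BCDSeries.D n)) : Prop := a.val = n - 1 ∨ a.val = n

def midSwap (a : Fin (bigN BCDSeries.D n)) : Fin (bigN BCDSeries.D n) :=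
  if IsMid a then pr a else a

lemma val_lt_two_mul (a : Fin (bigN BCDSeries.D n)) : a.val < 2 * n := a.isLt

lemma val_midSwap (a : Fin (bigN BCDSeries.D n)) :
    (midSwap a).val = if IsMid a then 2 * n - 1 - a.val else a.val := by
  unfold midSwap; split_ifs <;> rfl

lemma isMid_pr {a : Fin (bigN BCDSeries.D n)} : IsMid (pr a) ↔ IsMid a := by
  have := val_lt_two_mul a
  simp only [IsMid, pr, bigN]
  omega

lemma midSwap_of_isMid {a : Fin (bigN BCDSeries.D n)} (h : IsMid a) : midSwap a = pr a :=
  if_pos h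

lemma midSwap_of_not_isMid {a : Fin (bigN BCDSeries.D n)} (h : ¬IsMid a) : midSwap a = a :=
  if_neg h

lemma midSwap_midSwap (a : Fin (bigN BCDSeries.D n)) : midSwap (midSwap a) = a := by
  by_cases h : IsMid a
  · rw [midSwap_of_isMid h, midSwap_of_isMid (isMid_pr.mpr h), pr_pr]
  · rw [midSwap_of_not_isMid h, midSwap_of_not_isMid h]

lemma midSwap_injective : Function.Injective (midSwap (n := n)) :=
  Function.LeftInverse.injective midSwap_midSwap

lemma kd_midSwap (a b : Fin (bigN BCDSeries.D n)) : kd (midSwap a) (midSwap b) = kd a b := by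
  simp only [kd, midSwap_injective.eq_iff]

lemma pr_midSwap (a : Fin (bigN BCDSeries.D n)) : pr (midSwap a) = midSwap (pr a) := by
  by_cases h : IsMid a
  · rw [midSwap_of_isMid h, midSwap_of_isMid (isMid_pr.mpr h)]
  · rw [midSwap_of_not_isMid h, midSwap_of_not_isMid (mt isMid_pr.mp h)]

lemma twoRho_midSwap (a : Fin (bigN BCDSeries.D n)) :
    twoRho BCDSeries.D n (midSwap a).val = twoRho BCDSeries.D n a.val := by
  have := val_lt_two_mul a
  unfold midSwap
  split_ifs
  · simp only [twoRho, pr, bigN]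
    split_ifs <;> omega
  · rfl

lemma midSwap_lt_midSwap_iff {a b : Fin (bigN BCDSeries.D n)} (h : ¬(IsMid a ∧ b = pr a)) :
    midSwap b < midSwap a ↔ b < a := by
  have := val_lt_two_mul a
  have := val_lt_two_mul b
  have h' : ¬(IsMid a ∧ b.val = 2 * n - 1 - a.val) := fun hv => h ⟨hv.1, Fin.ext hv.2⟩
  rw [Fin.lt_def, Fin.lt_def, val_midSwap, val_midSwap]
  split_ifs <;> omega

lemma Dmat_eq_kd_left (a b : Fin (bigN BCDSeries.D n)) :
    Dmat BCDSeries.D n a b = kd b (midSwap a) := by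
  have := val_lt_two_mul a
  have := val_lt_two_mul b
  simp only [Dmat, DmatE, kd, Fin.ext_iff, val_midSwap]
  split_ifs <;> first | rfl | omega

lemma Dmat_eq_kd_right (a b : Fin (bigN BCDSeries.D n)) :
    Dmat BCDSeries.D n a b = kd a (midSwap b) := by
  have := val_lt_two_mul a
  have := val_lt_two_mul b
  simp only [Dmat, DmatE, kd, Fin.ext_iff, val_midSwap]
  split_ifs <;> first | rfl | omega

lemma crossTerm_midSwap (s : ℂ) (a b c d : Fin (bigN BCDSeries.D n)) :
    (if midSwap b < midSwap a then (1 : ℂ) else 0) * kd b c * kd a d -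
        (if midSwap c < midSwap a then (1 : ℂ) else 0) *
          s ^ (twoRho BCDSeries.D n a.val - twoRho BCDSeries.D n c.val) * kd b (pr a) * kd d (pr c)
      = (if b < a then (1 : ℂ) else 0) * kd b c * kd a d -
        (if c < a then (1 : ℂ) else 0) *
          s ^ (twoRho BCDSeries.D n a.val - twoRho BCDSeries.D n c.val) * kd b (pr a) * kd d (pr c) := by
  by_cases hb : IsMid a ∧ b = pr a
  · obtain ⟨ha, rfl⟩ := hb
    by_cases hc : c = pr a
    · subst hc
      have hρ : twoRho BCDSeries.D n (pr a).val = twoRho BCDSeries.D n a.val := by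
        rw [← midSwap_of_isMid ha, twoRho_midSwap]
      rw [hρ, sub_self, zpow_zero, pr_pr, kd_self, kd_comm d a]
      ring
    · simp only [kd_of_ne (Ne.symm hc), midSwap_lt_midSwap_iff (fun h => hc h.2), mul_zero,
        zero_mul]
  · simp only [midSwap_lt_midSwap_iff hb]
    by_cases hc : IsMid a ∧ c = pr a
    · rw [kd_of_ne (fun h => hb ⟨hc.1, h⟩)]
      ring
    · simp only [midSwap_lt_midSwap_iff hc]

theorem Rbcd_midSwap (r s : ℂ) (q : Fin (bigN BCDSeries.D n) → Fin (bigN BCDSeries.D n) → ℂ)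
    (a b c d : Fin (bigN BCDSeries.D n)) :
    Rbcd BCDSeries.D n r s q (midSwap a) (midSwap b) (midSwap c) (midSwap d)
      = Rbcd BCDSeries.D n r s (fun x y => q (midSwap x) (midSwap y)) a b c d := by
  simp only [Rbcd, kd_midSwap, pr_midSwap, twoRho_midSwap, isN2, epsA, one_mul]
  rw [crossTerm_midSwap]

lemma eq_pr_of_isMid {a b : Fin (bigN BCDSeries.D n)} (ha : IsMid a) (hb : IsMid b)
    (hab : a ≠ b) : b = pr a := by
  have := val_lt_two_mul a
  refine Fin.ext ?_
  have : a.val ≠ b.val := fun h => hab (Fin.ext h)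
  simp only [pr, bigN]
  omega

theorem q_midSwap_mul_self (r : ℂ) (q : Fin (bigN BCDSeries.D n) → Fin (bigN BCDSeries.D n) → ℂ)
    (hqaa : ∀ a, q a a = r) (hqsym : ∀ a b, q b a * q a b = r ^ 2)
    (hqpr1 : ∀ a b, q a b * q a (pr b) = r ^ 2) (hqpr2 : ∀ a b, q a b * q (pr a) b = r ^ 2)
    {a b : Fin (bigN BCDSeries.D n)} (h : IsMid a ∨ IsMid b) :
    q (midSwap a) (midSwap b) * q a b = r ^ 2 := by
  by_cases ha : IsMid a <;> by_cases hb : IsMid b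
  · rw [midSwap_of_isMid ha, midSwap_of_isMid hb]
    by_cases hab : a = b
    · rw [← hab, hqaa, hqaa, sq]
    · rw [eq_pr_of_isMid ha hb hab, pr_pr]
      exact hqsym a (pr a)
  · rw [midSwap_of_isMid ha, midSwap_of_not_isMid hb, mul_comm]
    exact hqpr2 a b
  · rw [midSwap_of_not_isMid ha, midSwap_of_isMid hb, mul_comm]
    exact hqpr1 a b
  · exact absurd h (not_or.mpr ⟨ha, hb⟩)

theorem q_midSwap_eq_inv_conj (r : ℂ) (habsr : ‖r‖ = 1)
    (q : Fin (bigN BCDSeries.D n) → Fin (bigN BCDSeries.D n) → ℂ)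
    (hqaa : ∀ a, q a a = r) (hqsym : ∀ a b, q b a * q a b = r ^ 2)
    (hqpr1 : ∀ a b, q a b * q a (pr b) = r ^ 2) (hqpr2 : ∀ a b, q a b * q (pr a) b = r ^ 2)
    (hqabs : ∀ a b, ¬IsMid a → ¬IsMid b → ‖q a b‖ = 1)
    (hqreal : ∀ a b, IsMid a ∨ IsMid b → (q a b / r).im = 0) (a b : Fin (bigN BCDSeries.D n)) :
    q (midSwap a) (midSwap b) = (starRingEnd ℂ (q a b))⁻¹ := by
  by_cases h : IsMid a ∨ IsMid b
  · have hprod := q_midSwap_mul_self r q hqaa hqsym hqpr1 hqpr2 h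
    have hq₀ : q a b ≠ 0 :=
      right_ne_zero_of_mul (hprod ▸ pow_ne_zero 2 (ne_zero_of_norm_ne_zero (habsr ▸ one_ne_zero)))
    rw [conj_eq_div_sq_of_im_div_eq_zero habsr (hqreal a b h), inv_div,
      eq_div_iff hq₀, hprod]
  · obtain ⟨ha, hb⟩ := not_or.mp h
    rw [midSwap_of_not_isMid ha, midSwap_of_not_isMid hb,
      ← Complex.inv_eq_conj (hqabs a b ha hb), inv_inv]

end DSeries

theorem statement6_general (n : ℕ) (r s : ℂ) (hs : s ^ 2 = r)
    (habsr : ‖r‖ = 1)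
    (q : Fin (bigN BCDSeries.D n) → Fin (bigN BCDSeries.D n) → ℂ)
    (hqaa : ∀ a, q a a = r)
    (hqsym : ∀ a b, q b a * q a b = r ^ 2)
    (hqpr1 : ∀ a b, q a b * q a (pr b) = r ^ 2)
    (hqpr2 : ∀ a b, q a b * q (pr a) b = r ^ 2)
    (hqabs : ∀ a b : Fin (bigN BCDSeries.D n),
      a.val ≠ n - 1 → a.val ≠ n → b.val ≠ n - 1 → b.val ≠ n → ‖q a b‖ = 1)
    (hqreal : ∀ a b : Fin (bigN BCDSeries.D n),
      (a.val = n - 1 ∨ a.val = n ∨ b.val = n - 1 ∨ b.val = n) → (q a b / r).im = 0) :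
    ∀ a b c d : Fin (bigN BCDSeries.D n),
      (∑ e : Fin (bigN BCDSeries.D n), ∑ f : Fin (bigN BCDSeries.D n),
       ∑ g : Fin (bigN BCDSeries.D n), ∑ h : Fin (bigN BCDSeries.D n),
          Dmat BCDSeries.D n a e * Dmat BCDSeries.D n b f *
            Rbcd BCDSeries.D n r s q e f g h *
            Dmat BCDSeries.D n g c * Dmat BCDSeries.D n h d)
        = (starRingEnd ℂ) (RbcdInv BCDSeries.D n r s q a b c d) := by
  intro a b c d
  have habss : ‖s‖ = 1 := by
    rw [← pow_eq_one_iff_of_nonneg (norm_nonneg s) two_ne_zero, ← norm_pow, hs, habsr]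
  have hqabs' : ∀ x y, ¬IsMid x → ¬IsMid y → ‖q x y‖ = 1 := fun x y hx hy =>
    hqabs x y (not_or.mp hx).1 (not_or.mp hx).2 (not_or.mp hy).1 (not_or.mp hy).2
  have hqreal' : ∀ x y, IsMid x ∨ IsMid y → (q x y / r).im = 0 := fun x y h =>
    hqreal x y (or_assoc.mp h)
  have hq : ∀ x y, q (midSwap x) (midSwap y) = starRingEnd ℂ (q x y)⁻¹ := fun x y => by
    rw [map_inv₀, q_midSwap_eq_inv_conj r habsr q hqaa hqsym hqpr1 hqpr2 hqabs' hqreal']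
  rw [sum_permMatrix_conj midSwap _ Dmat_eq_kd_left Dmat_eq_kd_right, Rbcd_midSwap, RbcdInv,
    conj_Rbcd, map_inv₀, map_inv₀, ← Complex.inv_eq_conj habsr, ← Complex.inv_eq_conj habss,
    inv_inv, inv_inv]
  simp only [hq]

/-- for the orthogonal series `D_n` (N = 2n), assuming `|r| = 1`,
`|q_{ab}| = 1` whenever `a` and `b` are both different from `n` and `n+1`, and
`q_{ab}/r ∈ ℝ` whenever at least one of `a, b` equals `n` or `n+1` (paper indices;
0-based `n−1` and `n`), the permutation matrix `𝒟` exchanging the indices `n` and `n+1`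
satisfies `(𝒟 ⊗ 𝒟) R (𝒟 ⊗ 𝒟) = conj(R⁻¹)`, where `R⁻¹ = R_{q⁻¹,r⁻¹}` is the matrix
inverse of `R` and `conj` is entrywise complex conjugation. -/
theorem statement6 (n : ℕ) (r s : ℂ) (hr : r ≠ 0) (hs : s ^ 2 = r)
    (habsr : ‖r‖ = 1)
    (q : Fin (bigN BCDSeries.D n) → Fin (bigN BCDSeries.D n) → ℂ)
    (hq0 : ∀ a b, q a b ≠ 0)
    (hqaa : ∀ a, q a a = r)
    (hqsym : ∀ a b, q b a * q a b = r ^ 2)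
    (hqpr1 : ∀ a b, q a b * q a (pr b) = r ^ 2)
    (hqpr2 : ∀ a b, q a b * q (pr a) b = r ^ 2)
    (hqpr3 : ∀ a b, q a b = q (pr a) (pr b))
    (hqabs : ∀ a b : Fin (bigN BCDSeries.D n),
      a.val ≠ n - 1 → a.val ≠ n → b.val ≠ n - 1 → b.val ≠ n → ‖q a b‖ = 1)
    (hqreal : ∀ a b : Fin (bigN BCDSeries.D n),
      (a.val = n - 1 ∨ a.val = n ∨ b.val = n - 1 ∨ b.val = n) → (q a b / r).im = 0) :
    ∀ a b c d : Fin (bigN BCDSeries.D n),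
      (∑ e : Fin (bigN BCDSeries.D n), ∑ f : Fin (bigN BCDSeries.D n),
       ∑ g : Fin (bigN BCDSeries.D n), ∑ h : Fin (bigN BCDSeries.D n),
          Dmat BCDSeries.D n a e * Dmat BCDSeries.D n b f *
            Rbcd BCDSeries.D n r s q e f g h *
            Dmat BCDSeries.D n g c * Dmat BCDSeries.D n h d)
        = (starRingEnd ℂ) (RbcdInv BCDSeries.D n r s q a b c d) :=
  statement6_general n r s hs habsr q hqaa hqsym hqpr1 hqpr2 hqabs hqreal
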